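/- Let V ⊂ ℝⁿ be a finite set and k ≥ 1 an integer. Let SC^k = {0, e₁, ..., e_k} ⊂ ℝ^k be the k-semicross, where e_i is the i-th standard basis vector. Then every subset W of the Cartesian power V^k ⊆ ℝ^{nk} (with the Euclidean metric) containing no isometric copy of SC^k satisfies |W| ≤ k · |V|^{k−1} · α(V). -/

import Mathlib

/-- The point of `ℝ^{n·k}` corresponding to a `k`-tuple of points of `ℝⁿ`
(coordinatewise concatenation). -/
noncomputable def powPoint {n k : ℕ} (v : Fin k → EuclideanSpace ℝ (Fin n)) :
    EuclideanSpace ℝ (Fin (n * k)) :=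
  WithLp.toLp 2 fun j => v (finProdFinEquiv.symm j).2 (finProdFinEquiv.symm j).1

/-- `M'` is an isometric copy of `M` in `ℝ^N` (Euclidean metric). -/
def IsIsomCopy {d N : ℕ} (M : Set (EuclideanSpace ℝ (Fin d)))
    (M' : Set (EuclideanSpace ℝ (Fin N))) : Prop :=
  ∃ f : EuclideanSpace ℝ (Fin d) → EuclideanSpace ℝ (Fin N),
    (∀ x ∈ M, ∀ y ∈ M, dist (f x) (f y) = dist x y) ∧ M' = f '' M

/-- For a finite `V ⊂ ℝⁿ`, `alphaE V` is the largest size of a subset of `V` no two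
points of which are at Euclidean distance `1`. -/
noncomputable def alphaE {n : ℕ} (V : Finset (EuclideanSpace ℝ (Fin n))) : ℕ :=
  sSup {m | ∃ W ⊆ V, (∀ x ∈ W, ∀ y ∈ W, dist x y ≠ 1) ∧ W.card = m}

/-- The `k`-semicross `SC^k = {0, e₁, …, e_k} ⊂ ℝ^k`. -/
noncomputable def semicross (k : ℕ) : Set (EuclideanSpace ℝ (Fin k)) :=
  insert 0 (Set.range fun i : Fin k => EuclideanSpace.single i (1 : ℝ))

/-!
If a point `v = (v₁, …, v_k)` of `W` had, in every direction `i`, a neighbour in `W` obtained by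
moving `vᵢ` to some `uᵢ` at distance `1`, then `x ↦ (vⱼ + xⱼ (uⱼ - vⱼ))ⱼ` would be an isometric
copy of the semicross inside `W`. So every point of `W` is blocked in some direction `i`. Among
the points blocked at `i` that agree off `i`, the `i`-th coordinates form a subset of `V` without
unit distances, so there are at most `α(V)` of them; there are `k` directions and `|V|^(k-1)`
choices of the remaining coordinates.
-/

section Blocking

variable {ι α : Type*} [DecidableEq ι]

def IsBlockedAt (r : α → α → Prop) (T : Finset (ι → α)) (t : ι → α) (i : ι) : Prop :=
  ∀ u, r (t i) u → Function.update t i u ∉ T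

variable {r : α → α → Prop} {V : Finset α} {a : ℕ}

lemma IsBlockedAt.mono {T B : Finset (ι → α)} {t : ι → α} {i : ι} (h : IsBlockedAt r T t i)
    (hBT : B ⊆ T) : IsBlockedAt r B t i :=
  fun u hu hmem => h u hu (hBT hmem)

lemma card_le_of_isBlockedAt_of_eqOn_ne
    (ha : ∀ U ⊆ V, (∀ x ∈ U, ∀ y ∈ U, ¬ r x y) → U.card ≤ a)
    {i : ι} {F : Finset (ι → α)} (hV : ∀ t ∈ F, t i ∈ V)
    (hagree : ∀ t ∈ F, ∀ t' ∈ F, ∀ j ≠ i, t j = t' j)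
    (hblock : ∀ t ∈ F, IsBlockedAt r F t i) :
    F.card ≤ a := by
  classical
  have hupdate : ∀ t ∈ F, ∀ t' ∈ F, Function.update t i (t' i) = t' := by
    intro t ht t' ht'
    funext j
    by_cases hj : j = i
    · subst hj; simp
    · rw [Function.update_of_ne hj, hagree t ht t' ht' j hj]
  have hinj : Set.InjOn (fun t : ι → α => t i) F := by
    intro t ht t' ht' (hti : t i = t' i)
    rw [← hupdate t ht t' ht', ← hti, Function.update_eq_self]
  rw [← Finset.card_image_of_injOn hinj]
  refine ha _ (by simpa [Finset.image_subset_iff] using hV) ?_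
  simp only [Finset.mem_image]
  rintro _ ⟨t, ht, rfl⟩ _ ⟨t', ht', rfl⟩ hr
  exact hblock t ht (t' i) hr (by rwa [hupdate t ht t' ht'])

lemma card_le_of_forall_isBlockedAt [Fintype ι]
    (ha : ∀ U ⊆ V, (∀ x ∈ U, ∀ y ∈ U, ¬ r x y) → U.card ≤ a)
    {i : ι} {B : Finset (ι → α)} (hV : ∀ t ∈ B, ∀ j, t j ∈ V)
    (hblock : ∀ t ∈ B, IsBlockedAt r B t i) :
    B.card ≤ V.card ^ (Fintype.card ι - 1) * a := by
  classical
  let restrict : (ι → α) → ({j // j ≠ i} → α) := fun t j => t j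
  have hmaps : ∀ t ∈ B, restrict t ∈ Fintype.piFinset fun _ => V :=
    fun t ht => Fintype.mem_piFinset.mpr fun j => hV t ht j
  have hfiber : ∀ b ∈ Fintype.piFinset (fun _ => V), {t ∈ B | restrict t = b}.card ≤ a := by
    intro b _
    refine card_le_of_isBlockedAt_of_eqOn_ne ha (fun t ht => hV t (Finset.mem_filter.mp ht).1 i)
      ?_ fun t ht => (hblock t (Finset.mem_filter.mp ht).1).mono (Finset.filter_subset _ _)
    intro t ht t' ht' j hj
    have h := (Finset.mem_filter.mp ht).2.trans (Finset.mem_filter.mp ht').2.symm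
    exact congrFun h ⟨j, hj⟩
  calc B.card ≤ a * (Fintype.piFinset fun _ : {j // j ≠ i} => V).card :=
        Finset.card_le_mul_card_image_of_maps_to hmaps a hfiber
    _ = V.card ^ (Fintype.card ι - 1) * a := by simp [mul_comm]

theorem card_le_of_forall_exists_isBlockedAt [Fintype ι]
    (ha : ∀ U ⊆ V, (∀ x ∈ U, ∀ y ∈ U, ¬ r x y) → U.card ≤ a)
    {T : Finset (ι → α)} (hV : ∀ t ∈ T, ∀ j, t j ∈ V)
    (hblock : ∀ t ∈ T, ∃ i, IsBlockedAt r T t i) :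
    T.card ≤ Fintype.card ι * V.card ^ (Fintype.card ι - 1) * a := by
  classical
  have hcover : T ⊆ Finset.univ.biUnion fun i => {t ∈ T | IsBlockedAt r T t i} := by
    intro t ht
    obtain ⟨i, hi⟩ := hblock t ht
    exact Finset.mem_biUnion.mpr ⟨i, Finset.mem_univ i, Finset.mem_filter.mpr ⟨ht, hi⟩⟩
  have hdir : ∀ i, {t ∈ T | IsBlockedAt r T t i}.card ≤ V.card ^ (Fintype.card ι - 1) * a :=
    fun i => card_le_of_forall_isBlockedAt ha
      (fun t ht => hV t (Finset.mem_filter.mp ht).1)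
      fun t ht => (Finset.mem_filter.mp ht).2.mono (Finset.filter_subset _ _)
  calc T.card ≤ ∑ i, {t ∈ T | IsBlockedAt r T t i}.card :=
        (Finset.card_le_card hcover).trans Finset.card_biUnion_le
    _ ≤ ∑ _i : ι, V.card ^ (Fintype.card ι - 1) * a := Finset.sum_le_sum fun i _ => hdir i
    _ = Fintype.card ι * V.card ^ (Fintype.card ι - 1) * a := by
        rw [Finset.sum_const, Finset.card_univ, smul_eq_mul, mul_assoc]

end Blocking

lemma card_le_alphaE {n : ℕ} {V U : Finset (EuclideanSpace ℝ (Fin n))} (hUV : U ⊆ V)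
    (hU : ∀ x ∈ U, ∀ y ∈ U, dist x y ≠ 1) : U.card ≤ alphaE V :=
  le_csSup ⟨V.card, by rintro _ ⟨U', hU', -, rfl⟩; exact Finset.card_le_card hU'⟩ ⟨U, hUV, hU, rfl⟩

section PowPoint

variable {n k : ℕ}

lemma dist_powPoint (v v' : Fin k → EuclideanSpace ℝ (Fin n)) :
    dist (powPoint v) (powPoint v') = √(∑ i, dist (v i) (v' i) ^ 2) := by
  rw [EuclideanSpace.dist_eq, ← finProdFinEquiv.sum_comp, Fintype.sum_prod_type, Finset.sum_comm]
  congr 1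
  refine Finset.sum_congr rfl fun i _ => ?_
  rw [EuclideanSpace.dist_eq, Real.sq_sqrt (by positivity)]
  simp only [powPoint, Equiv.symm_apply_apply]

lemma dist_powPoint_add_smul {t d : Fin k → EuclideanSpace ℝ (Fin n)} (hd : ∀ j, ‖d j‖ = 1)
    (x y : EuclideanSpace ℝ (Fin k)) :
    dist (powPoint fun j => t j + x j • d j) (powPoint fun j => t j + y j • d j) = dist x y := by
  rw [dist_powPoint, EuclideanSpace.dist_eq]
  congr 1
  refine Finset.sum_congr rfl fun j _ => ?_
  rw [dist_eq_norm, add_sub_add_left_eq_sub, ← sub_smul, norm_smul, hd, mul_one, Real.dist_eq,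
    Real.norm_eq_abs]

lemma add_single_smul_sub_eq_update (t u : Fin k → EuclideanSpace ℝ (Fin n)) (i : Fin k) :
    (fun j => t j + EuclideanSpace.single i (1 : ℝ) j • (u j - t j)) = Function.update t i (u i) := by
  funext j
  by_cases hj : j = i
  · subst hj; simp
  · simp [hj]

lemma exists_isIsomCopy_semicross {S : Set (EuclideanSpace ℝ (Fin (n * k)))}
    {t u : Fin k → EuclideanSpace ℝ (Fin n)} (ht : powPoint t ∈ S)
    (hu : ∀ i, dist (t i) (u i) = 1) (hS : ∀ i, powPoint (Function.update t i (u i)) ∈ S) :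
    ∃ M' ⊆ S, IsIsomCopy (semicross k) M' := by
  set f : EuclideanSpace ℝ (Fin k) → EuclideanSpace ℝ (Fin (n * k)) :=
    fun x => powPoint fun j => t j + x j • (u j - t j)
  have hd : ∀ j, ‖u j - t j‖ = 1 := fun j => by rw [← dist_eq_norm, dist_comm, hu]
  refine ⟨f '' semicross k, ?_, f, fun x _ y _ => dist_powPoint_add_smul hd x y, rfl⟩
  rintro _ ⟨x, hx | ⟨i, rfl⟩, rfl⟩
  · rw [Set.mem_singleton_iff.mp hx]
    simpa [f] using ht
  · simpa only [f, add_single_smul_sub_eq_update] using hS i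

lemma exists_forall_update_notMem_of_not_isIsomCopy {S : Set (EuclideanSpace ℝ (Fin (n * k)))}
    (hS : ¬ ∃ M' ⊆ S, IsIsomCopy (semicross k) M') {t : Fin k → EuclideanSpace ℝ (Fin n)}
    (ht : powPoint t ∈ S) :
    ∃ i, ∀ u, dist (t i) u = 1 → powPoint (Function.update t i u) ∉ S := by
  by_contra! h
  choose u hu huS using h
  exact hS (exists_isIsomCopy_semicross ht hu huS)

end PowPoint

theorem cutting_corners_semicross_general {n k : ℕ}
    (V : Finset (EuclideanSpace ℝ (Fin n)))
    (W : Finset (EuclideanSpace ℝ (Fin (n * k))))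
    (hW : ∀ w ∈ W, ∃ v : Fin k → EuclideanSpace ℝ (Fin n),
      (∀ i, v i ∈ V) ∧ w = powPoint v)
    (hno : ¬ ∃ M' ⊆ (W : Set (EuclideanSpace ℝ (Fin (n * k)))),
      IsIsomCopy (semicross k) M') :
    W.card ≤ k * V.card ^ (k - 1) * alphaE V := by
  classical
  set T := {t ∈ Fintype.piFinset fun _ : Fin k => V | powPoint t ∈ W}
  have hWT : W ⊆ T.image powPoint := by
    intro w hw
    obtain ⟨v, hv, rfl⟩ := hW w hw
    exact Finset.mem_image_of_mem _ (by simpa [T, hv] using hw)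
  have hblock : ∀ t ∈ T, ∃ i, IsBlockedAt (fun x y => dist x y = 1) T t i := by
    intro t ht
    obtain ⟨i, hi⟩ := exists_forall_update_notMem_of_not_isIsomCopy hno (Finset.mem_filter.mp ht).2
    exact ⟨i, fun u hu hmem => hi u hu (Finset.mem_filter.mp hmem).2⟩
  calc W.card ≤ T.card := (Finset.card_le_card hWT).trans Finset.card_image_le
    _ ≤ k * V.card ^ (k - 1) * alphaE V := by
      simpa using card_le_of_forall_exists_isBlockedAt (fun U hUV hU => card_le_alphaE hUV hU)
        (fun t ht => Fintype.mem_piFinset.mp (Finset.mem_filter.mp ht).1) hblock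

/-- Any subset `W` of the Cartesian power `V^k ⊆ ℝ^{nk}` containing no isometric copy
of the `k`-semicross satisfies `|W| ≤ k · |V|^{k−1} · α(V)`. -/
theorem cutting_corners_semicross {n k : ℕ} (hk : 1 ≤ k)
    (V : Finset (EuclideanSpace ℝ (Fin n)))
    (W : Finset (EuclideanSpace ℝ (Fin (n * k))))
    (hW : ∀ w ∈ W, ∃ v : Fin k → EuclideanSpace ℝ (Fin n),
      (∀ i, v i ∈ V) ∧ w = powPoint v)
    (hno : ¬ ∃ M' ⊆ (W : Set (EuclideanSpace ℝ (Fin (n * k)))),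
      IsIsomCopy (semicross k) M') :
    W.card ≤ k * V.card ^ (k - 1) * alphaE V :=
  cutting_corners_semicross_general V W hW hno
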